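/- arXiv:1411.5986 — 2 statements merged into one kernel-verified Lean document; each statement's English description precedes it below -/
import Mathlib

section
/- Let 1/2 < v ≤ 1 and let ρ_v = v|ψ⁻⟩⟨ψ⁻| + (1−v)·I₄/4 be the Werner state, with correlation function E(m,n) = Tr[((m·σ) ⊗ (n·σ)) ρ_v] for unit vectors m, n ∈ ℝ³. Then E admits no LHS (non-steering) model; i.e. the Werner state is steerable for all v > 1/2. -/
open MeasureTheory Matrix
open Kronecker

noncomputable section

/-- `ℝ³` with the Euclidean norm. -/
abbrev V3 : Type := EuclideanSpace ℝ (Fin 3)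

/-- The unit sphere `S² ⊂ ℝ³` (as a subtype). -/
abbrev Sph : Type := Metric.sphere (0 : V3) 1

/-- Euclidean dot product on `ℝ³`. -/
def dot (x y : V3) : ℝ := ∑ i, x i * y i

/-- A local-hidden-state (LHS, non-steering) model for a correlation function `E` on `S²×S²`:
a finite index set, probabilities `p λ ≥ 0` summing to `1`, measurable response functions
`I(·,λ) : S² → [-1,1]`, and unit (Bloch) vectors `λ⃗_λ ∈ ℝ³` reproducing
`E(m,n) = ∑_λ p_λ I(m,λ) (n · λ⃗_λ)` for all unit vectors `m, n`. -/
def HasLHSModel (E : V3 → V3 → ℝ) : Prop :=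
  ∃ (N : ℕ) (p : Fin N → ℝ) (I : Fin N → Sph → ℝ) (lam : Fin N → V3),
    (∀ l, 0 ≤ p l) ∧ (∑ l, p l) = 1 ∧
    (∀ l, Measurable (I l)) ∧
    (∀ l m, |I l m| ≤ 1) ∧
    (∀ l, ‖lam l‖ = 1) ∧
    (∀ m n : Sph, E m n = ∑ l, p l * I l m * dot n (lam l))

/-- The Pauli matrices `σ₀ = I₂, σ₁, σ₂, σ₃`. -/
def pauli : Fin 4 → Matrix (Fin 2) (Fin 2) ℂ :=
  ![1,
    !![0, 1; 1, 0],
    !![0, -Complex.I; Complex.I, 0],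
    !![1, 0; 0, -1]]

/-- Kronecker product of two `2×2` matrices, reindexed as a `4×4` matrix
(row/column `(i,j)` of `A ⊗ B` corresponds to `2i + j`, i.e. the computational
basis ordering `|00⟩, |01⟩, |10⟩, |11⟩`). -/
def kron (A B : Matrix (Fin 2) (Fin 2) ℂ) : Matrix (Fin 4) (Fin 4) ℂ :=
  Matrix.reindex finProdFinEquiv finProdFinEquiv (A ⊗ₖ B)

/-- `m·σ = ∑ᵢ mᵢ σᵢ` for `m ∈ ℝ³`. -/
def dotSigma (m : V3) : Matrix (Fin 2) (Fin 2) ℂ :=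
  ∑ i : Fin 3, (m i : ℂ) • pauli i.succ

/-- The singlet state `|ψ⁻⟩ = (|01⟩ − |10⟩)/√2` in the computational basis of `ℂ⁴`. -/
def psiMinus : Fin 4 → ℂ :=
  ![0, ((1 / Real.sqrt 2 : ℝ) : ℂ), ((-(1 / Real.sqrt 2) : ℝ) : ℂ), 0]

/-- The Werner state `ρ_v = v |ψ⁻⟩⟨ψ⁻| + (1−v) I₄/4`. -/
def wernerState (v : ℝ) : Matrix (Fin 4) (Fin 4) ℂ :=
  (v : ℂ) • Matrix.vecMulVec psiMinus (fun j => starRingEnd ℂ (psiMinus j)) +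
    (((1 - v : ℝ) : ℂ) / 4) • (1 : Matrix (Fin 4) (Fin 4) ℂ)

/-! The correlation function is `E(m,n) = -v m·n`. Taking `n = m` in an LHS model gives
`v ≤ ∑ p_λ |m·λ⃗_λ|` for every unit vector `m`, hence `v‖x‖ ≤ ∑ p_λ |x·λ⃗_λ|` on all of `ℝ³`.
Integrating against the Gaussian weight `exp (-‖x‖²)` gives `2πv` on the left and, by rotation
invariance, `π` on the right (the mean of `|x·u|` over the sphere is half that of `‖x‖`);
so `v ≤ 1/2`. -/

open Real Set MeasureTheory
open scoped RealInnerProductSpace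

theorem integral_abs_mul_exp_neg_sq : ∫ x : ℝ, |x| * exp (-x ^ 2) = 1 := by
  have h := integral_rpow_mul_exp_neg_rpow (p := 2) (q := 1) two_pos (by norm_num)
  norm_num at h
  have := integral_comp_abs (f := fun t => t * exp (-t ^ 2))
  simp only [sq_abs, h] at this
  rw [this]
  norm_num

theorem EuclideanSpace.integral_abs_apply_mul_exp_neg_norm_sq {ι : Type*} [Fintype ι]
    [DecidableEq ι] (i : ι) :
    ∫ x : EuclideanSpace ℝ ι, |x i| * exp (-‖x‖ ^ 2) = √π ^ (Fintype.card ι - 1) := by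
  set g : ι → ℝ → ℝ := fun j t => (if j = i then |t| else 1) * exp (-t ^ 2)
  have hg : ∀ y : ι → ℝ, |y i| * exp (-‖WithLp.toLp 2 y‖ ^ 2) = ∏ j, g j (y j) := by
    intro y
    simp only [g, Finset.prod_mul_distrib, Finset.prod_ite_eq', Finset.mem_univ, if_true,
      EuclideanSpace.norm_sq_eq, Real.norm_eq_abs, sq_abs, ← exp_sum, Finset.sum_neg_distrib]
  have hg_integral : ∀ j, ∫ t, g j t = if j = i then 1 else √π := by
    intro j
    by_cases hj : j = i
    · simpa [g, hj] using integral_abs_mul_exp_neg_sq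
    · simpa [g, hj] using integral_gaussian 1
  rw [← (EuclideanSpace.volume_preserving_symm_measurableEquiv_toLp ι).symm.integral_comp']
  simp only [MeasurableEquiv.symm_symm, MeasurableEquiv.toLp_apply, hg,
    integral_fintype_prod_volume_eq_prod, hg_integral]
  rw [← Finset.mul_prod_erase _ _ (Finset.mem_univ i), if_pos rfl, one_mul,
    Finset.prod_ite_of_false fun j hj => Finset.ne_of_mem_erase hj, Finset.prod_const,
    Finset.card_erase_of_mem (Finset.mem_univ i), Finset.card_univ]

theorem integral_comp_inner_norm_eq_of_norm_eq {E G : Type*} [NormedAddCommGroup E]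
    [InnerProductSpace ℝ E] [FiniteDimensional ℝ E] [MeasurableSpace E] [BorelSpace E]
    [NormedAddCommGroup G] [NormedSpace ℝ G] {u w : E} (h : ‖u‖ = ‖w‖) (f : ℝ → ℝ → G) :
    ∫ x, f ⟪x, u⟫ ‖x‖ = ∫ x, f ⟪x, w⟫ ‖x‖ := by
  set R := Submodule.reflection (ℝ ∙ (w - u))ᗮ
  have hRw : R w = u := Submodule.reflection_sub h.symm
  rw [← R.measurePreserving.integral_comp R.toHomeomorph.measurableEmbedding]
  congr 1 with x
  rw [← hRw, LinearIsometryEquiv.inner_map_map, R.norm_map]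

theorem integral_norm_mul_exp_neg_norm_sq_fin_three :
    ∫ x : EuclideanSpace ℝ (Fin 3), ‖x‖ * exp (-‖x‖ ^ 2) = 2 * π := by
  have h := integral_rpow_mul_exp_neg_rpow (p := 2) (q := 3) two_pos (by norm_num)
  norm_num at h
  rw [integral_fun_norm_addHaar volume fun r => r * exp (-r ^ 2)]
  simp only [← mul_assoc, ← pow_succ, finrank_euclideanSpace_fin, measureReal_def,
    EuclideanSpace.volume_ball_fin_three, smul_eq_mul, h, nsmul_eq_mul]
  rw [ENNReal.toReal_mul, ENNReal.toReal_ofReal (by positivity)]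
  norm_num
  ring

theorem integrable_norm_mul_exp_neg_norm_sq_fin_three :
    Integrable fun x : EuclideanSpace ℝ (Fin 3) => ‖x‖ * exp (-‖x‖ ^ 2) := by
  have h := (integrable_rpow_mul_exp_neg_mul_sq (b := 1) one_pos (s := 3) (by norm_num)).integrableOn
    (s := Ioi 0)
  rw [integrable_fun_norm_addHaar volume (f := fun r => r * exp (-r ^ 2))]
  norm_num at h
  simpa only [finrank_euclideanSpace_fin, smul_eq_mul, ← mul_assoc, ← pow_succ] using h

theorem integral_abs_inner_mul_exp_neg_norm_sq_fin_three {u : EuclideanSpace ℝ (Fin 3)}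
    (hu : ‖u‖ = 1) : ∫ x, |⟪x, u⟫| * exp (-‖x‖ ^ 2) = π := by
  refine (integral_comp_inner_norm_eq_of_norm_eq (w := EuclideanSpace.single 2 1)
    (by simp [hu]) fun a r => |a| * exp (-r ^ 2)).trans ?_
  show ∫ x, |⟪x, EuclideanSpace.single 2 1⟫| * exp (-‖x‖ ^ 2) = π
  simp [EuclideanSpace.inner_single_right, EuclideanSpace.integral_abs_apply_mul_exp_neg_norm_sq,
    pi_pos.le]

theorem integrable_abs_inner_mul_exp_neg_norm_sq_fin_three (u : EuclideanSpace ℝ (Fin 3)) :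
    Integrable fun x => |⟪x, u⟫| * exp (-‖x‖ ^ 2) := by
  refine (integrable_norm_mul_exp_neg_norm_sq_fin_three.const_mul ‖u‖).mono' (by fun_prop)
    (.of_forall fun x => ?_)
  rw [norm_of_nonneg (by positivity), ← mul_assoc, mul_comm ‖u‖]
  exact mul_le_mul_of_nonneg_right (abs_real_inner_le_norm x u) (exp_pos _).le

theorem neg_sum_mul_le_sum_mul_abs {ι : Type*} (s : Finset ι) {p I a : ι → ℝ}
    (hp : ∀ l ∈ s, 0 ≤ p l) (hI : ∀ l ∈ s, |I l| ≤ 1) :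
    -∑ l ∈ s, p l * I l * a l ≤ ∑ l ∈ s, p l * |a l| := by
  rw [← Finset.sum_neg_distrib]
  refine Finset.sum_le_sum fun l hl => (neg_le_abs _).trans ?_
  rw [abs_mul, abs_mul, abs_of_nonneg (hp l hl)]
  exact mul_le_mul_of_nonneg_right (mul_le_of_le_one_right (hp l hl) (hI l hl)) (abs_nonneg _)

theorem mul_norm_le_sum_mul_abs_inner {E ι : Type*} [NormedAddCommGroup E]
    [InnerProductSpace ℝ E] (s : Finset ι) {p : ι → ℝ} {w : ι → E} {c : ℝ}
    (h : ∀ m ∈ Metric.sphere (0 : E) 1, c ≤ ∑ l ∈ s, p l * |⟪m, w l⟫|) (x : E) :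
    c * ‖x‖ ≤ ∑ l ∈ s, p l * |⟪x, w l⟫| := by
  rcases eq_or_ne x 0 with rfl | hx
  · simp
  have hx' : 0 < ‖x‖ := norm_pos_iff.mpr hx
  have hm : ‖x‖⁻¹ • x ∈ Metric.sphere (0 : E) 1 := by
    simp [norm_smul, hx'.ne']
  calc c * ‖x‖ ≤ (∑ l ∈ s, p l * |⟪‖x‖⁻¹ • x, w l⟫|) * ‖x‖ :=
        mul_le_mul_of_nonneg_right (h _ hm) hx'.le
    _ = ∑ l ∈ s, p l * |⟪x, w l⟫| := by
        simp only [real_inner_smul_left, abs_mul, abs_inv, abs_norm, Finset.sum_mul]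
        refine Finset.sum_congr rfl fun l _ => ?_
        field_simp

theorem dot_eq_inner (x y : V3) : dot x y = ⟪x, y⟫ := by
  simp [dot, PiLp.inner_apply, mul_comm]

theorem le_half_of_hasLHSModel_neg_mul_dot {v : ℝ}
    (h : HasLHSModel fun m n => -v * dot m n) : v ≤ 1 / 2 := by
  obtain ⟨N, p, I, lam, hp, hp_sum, -, hI, hlam, hE⟩ := h
  have h_sphere : ∀ m ∈ Metric.sphere (0 : V3) 1, v ≤ ∑ l, p l * |⟪m, lam l⟫| := by
    intro m hm
    have h_corr : -v * dot m m = ∑ l, p l * I l ⟨m, hm⟩ * dot m (lam l) := hE ⟨m, hm⟩ ⟨m, hm⟩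
    simp only [dot_eq_inner, real_inner_self_eq_norm_sq, mem_sphere_zero_iff_norm.mp hm] at h_corr
    simpa [← h_corr] using neg_sum_mul_le_sum_mul_abs Finset.univ (fun l _ => hp l)
      (fun l _ => hI l ⟨m, hm⟩) (a := fun l => ⟪m, lam l⟫)
  have h_int : ∀ l, Integrable fun x : V3 => p l * (|⟪x, lam l⟫| * exp (-‖x‖ ^ 2)) := fun l =>
    (integrable_abs_inner_mul_exp_neg_norm_sq_fin_three (lam l)).const_mul (p l)
  have h_le : v * (2 * π) ≤ π := calc
    v * (2 * π) = ∫ x : V3, v * (‖x‖ * exp (-‖x‖ ^ 2)) := by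
      rw [integral_const_mul, integral_norm_mul_exp_neg_norm_sq_fin_three]
    _ ≤ ∫ x : V3, ∑ l, p l * (|⟪x, lam l⟫| * exp (-‖x‖ ^ 2)) := by
      refine integral_mono (integrable_norm_mul_exp_neg_norm_sq_fin_three.const_mul v)
        (integrable_finsetSum _ fun l _ => h_int l) fun x => ?_
      simpa only [← mul_assoc, ← Finset.sum_mul] using mul_le_mul_of_nonneg_right
        (mul_norm_le_sum_mul_abs_inner Finset.univ h_sphere x) (exp_pos (-‖x‖ ^ 2)).le
    _ = π := by
      simp only [integral_finsetSum _ fun l _ => h_int l, integral_const_mul,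
        integral_abs_inner_mul_exp_neg_norm_sq_fin_three (hlam _), ← Finset.sum_mul, hp_sum,
        one_mul]
  nlinarith [pi_pos]

theorem re_trace_kron_dotSigma_mul_wernerState (v : ℝ) (m n : V3) :
    (Matrix.trace (kron (dotSigma m) (dotSigma n) * wernerState v)).re = -v * dot m n := by
  simp [Matrix.trace, kron, dotSigma, pauli, wernerState, psiMinus, dot, Matrix.mul_apply,
    Fin.sum_univ_succ, Matrix.vecMulVec, Matrix.one_apply, finProdFinEquiv,
    Fin.divNat, Fin.modNat, Fin.succ]
  ring_nf
  rw [Real.sq_sqrt (by norm_num : (0:ℝ) ≤ 2)]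
  ring

theorem werner_state_steerable_general (v : ℝ) (hv : 1 / 2 < v) :
    ¬ HasLHSModel (fun m n =>
      (Matrix.trace (kron (dotSigma m) (dotSigma n) * wernerState v)).re) := by
  simp only [re_trace_kron_dotSigma_mul_wernerState]
  exact fun h => hv.not_ge (le_half_of_hasLHSModel_neg_mul_dot h)

/-- For `1/2 < v ≤ 1`, the correlation function
`E(m,n) = Tr[((m·σ) ⊗ (n·σ)) ρ_v]` of the Werner state admits no LHS (non-steering) model:
the Werner state is steerable for all `v > 1/2`. -/
theorem werner_state_steerable (v : ℝ) (hv : 1 / 2 < v) (hv' : v ≤ 1) :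
    ¬ HasLHSModel (fun m n =>
      (Matrix.trace (kron (dotSigma m) (dotSigma n) * wernerState v)).re) :=
  werner_state_steerable_general v hv

end
end

section
/- Let T and S be real 3×3 matrices, and let T₁ be the largest singular value of T. If (2/3) · Σ_{i,j=1}^3 T_{ij} S_{ij} > T₁, then the correlation function E_S(m,n) = m · (S n) admits no LHS (non-steering) model. -/
open MeasureTheory

noncomputable section

/-- The rotation-invariant surface measure `dΩ` on the unit sphere `S² ⊂ ℝ³`,
with total measure `4π`. -/
def dOmega : Measure Sph := (volume : Measure V3).toSphere

/-- The bilinear form `m · T n = ∑ᵢⱼ Tᵢⱼ mᵢ nⱼ` associated to a real `3×3` matrix `T`. -/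
def bilin (T : Matrix (Fin 3) (Fin 3) ℝ) (m n : V3) : ℝ := ∑ i, ∑ j, T i j * m i * n j

/-- The largest singular value of `T`, i.e. the supremum of `m · T n` over unit vectors. -/
def maxSingularValue (T : Matrix (Fin 3) (Fin 3) ℝ) : ℝ :=
  sSup {x : ℝ | ∃ m n : V3, ‖m‖ = 1 ∧ ‖n‖ = 1 ∧ x = bilin T m n}

/-!
Testing an LHS model of `E_S` against the basis vectors `n = e_j` shows `Sᵀ m = ∑_λ p_λ I(m,λ) λ⃗_λ`
for every unit vector `m`, hence `m · T Sᵀ m = ∑_λ p_λ I(m,λ) (m · T λ⃗_λ)`. Integrate over `m ∈ S²`.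
Since `∫ n_i n_j dΩ = (4π/3) δ_ij`, the left side integrates to `(4π/3) tr (T Sᵀ) = (4π/3) ∑ T_ij S_ij`;
since `|I| ≤ 1` and `∫ |n · a| dΩ = 2π ‖a‖`, the right side integrates to at most
`2π ∑_λ p_λ ‖T λ⃗_λ‖ ≤ 2π T₁`. Both spherical integrals come from Gaussian integrals over `ℝ³` in
polar coordinates, after rotating the vector involved onto a coordinate axis.
-/

open Real Set Metric
open scoped Matrix

section PolarCoordinates

variable {E : Type*} [NormedAddCommGroup E] [InnerProductSpace ℝ E] [FiniteDimensional ℝ E]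
  [MeasurableSpace E] [BorelSpace E]

theorem integral_eq_integral_toSphere_prod (μ : Measure E) [μ.IsAddHaarMeasure] [Nontrivial E]
    (f : E → ℝ) :
    ∫ x, f x ∂μ = ∫ p : sphere (0 : E) 1 × Ioi (0 : ℝ), f ((p.2 : ℝ) • (p.1 : E))
      ∂(μ.toSphere.prod (Measure.volumeIoiPow (Module.finrank ℝ E - 1))) := by
  rw [← (μ.measurePreserving_homeomorphUnitSphereProd).integral_comp
    (Homeomorph.measurableEmbedding _) (fun p => f ((p.2 : ℝ) • (p.1 : E)))]
  conv_lhs => rw [← restrict_compl_singleton (μ := μ) (0 : E),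
    ← integral_subtype_comap (measurableSet_singleton (0 : E)).compl]
  congr 1 with y
  have hy : (y : E) ≠ 0 := y.2
  simp [smul_inv_smul₀ (norm_ne_zero_iff.2 hy)]

theorem integral_volumeIoiPow (n : ℕ) (g : ℝ → ℝ) :
    ∫ r : Ioi (0 : ℝ), g r ∂(Measure.volumeIoiPow n) = ∫ r in Ioi (0 : ℝ), r ^ n * g r := by
  simp only [Measure.volumeIoiPow, ENNReal.ofReal]
  rw [integral_withDensity_eq_integral_smul
      ((measurable_subtype_coe.pow_const _).real_toNNReal) (fun r : Ioi (0:ℝ) => g r),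
    integral_subtype_comap measurableSet_Ioi fun a : ℝ => (a ^ n).toNNReal • g a]
  refine setIntegral_congr_fun measurableSet_Ioi fun x hx => ?_
  rw [NNReal.smul_def, Real.coe_toNNReal _ (pow_nonneg hx.out.le _), smul_eq_mul]

theorem integral_pow_mul_exp_neg_sq_Ioi (k : ℕ) :
    ∫ r in Ioi (0 : ℝ), r ^ k * exp (-r ^ 2) = Gamma ((k + 1) / 2) / 2 := by
  have h := integral_rpow_mul_exp_neg_rpow two_pos (neg_one_lt_zero.trans_le k.cast_nonneg)
  norm_cast at h
  rw [h]; push_cast; ring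

theorem integral_mul_exp_neg_norm_sq_of_homogeneous (μ : Measure E) [μ.IsAddHaarMeasure]
    [Nontrivial E] {f : E → ℝ} {k : ℕ} (hf : ∀ r : ℝ, 0 < r → ∀ x, f (r • x) = r ^ k * f x) :
    ∫ x, f x * exp (-‖x‖ ^ 2) ∂μ =
      (∫ n, f n ∂μ.toSphere) * (Gamma ((k + Module.finrank ℝ E) / 2) / 2) := by
  have hd : 0 < Module.finrank ℝ E := Module.finrank_pos
  have hsplit (p : sphere (0 : E) 1 × Ioi (0 : ℝ)) :
      f ((p.2 : ℝ) • (p.1 : E)) * exp (-‖(p.2 : ℝ) • (p.1 : E)‖ ^ 2) =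
        f p.1 * ((p.2 : ℝ) ^ k * exp (-(p.2 : ℝ) ^ 2)) := by
    rw [hf _ p.2.2, norm_smul, norm_eq_of_mem_sphere p.1, mul_one, norm_of_nonneg p.2.2.out.le]
    ring
  rw [integral_eq_integral_toSphere_prod, funext hsplit,
    integral_prod_mul (fun n : sphere (0 : E) 1 => f n)
      fun r : Ioi (0 : ℝ) => (r : ℝ) ^ k * exp (-(r : ℝ) ^ 2),
    integral_volumeIoiPow _ fun r => r ^ k * exp (-r ^ 2)]
  simp_rw [← mul_assoc, ← pow_add]
  rw [integral_pow_mul_exp_neg_sq_Ioi]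
  congr 3
  push_cast [Nat.sub_add_cancel hd, hd]
  ring

end PolarCoordinates

theorem exists_orthonormalBasis_inner_eq_norm_mul_repr {E ι : Type*} [NormedAddCommGroup E]
    [InnerProductSpace ℝ E] [FiniteDimensional ℝ E] [Fintype ι]
    (hι : Module.finrank ℝ E = Fintype.card ι) (a : E) (i : ι) :
    ∃ b : OrthonormalBasis ι ℝ E, ∀ x, inner ℝ x a = ‖a‖ * b.repr x i := by
  rcases eq_or_ne a 0 with rfl | ha
  · exact ⟨(stdOrthonormalBasis ℝ E).reindex (Fintype.equivFinOfCardEq hι.symm).symm,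
      fun x => by simp⟩
  have hu : Orthonormal ℝ (({i} : Set ι).domRestrict fun _ => ‖a‖⁻¹ • a) :=
    ⟨fun _ => norm_smul_inv_norm ha, fun j k hjk => absurd (Subsingleton.elim j k) hjk⟩
  obtain ⟨b, hb⟩ := hu.exists_orthonormalBasis_extension_of_card_eq hι
  refine ⟨b, fun x => ?_⟩
  rw [b.repr_apply_apply, hb i rfl, real_inner_smul_left, real_inner_comm, ← mul_assoc,
    mul_inv_cancel₀ (norm_ne_zero_iff.2 ha), one_mul]

theorem integral_euclideanSpace_prod_eq_prod {n : ℕ} (g : Fin n → ℝ → ℝ) :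
    ∫ x : EuclideanSpace ℝ (Fin n), ∏ k, g k (x k) = ∏ k, ∫ t, g k t := by
  rw [← (PiLp.volume_preserving_toLp (Fin n)).integral_comp
    (MeasurableEquiv.toLp 2 (Fin n → ℝ)).measurableEmbedding]
  exact integral_fintype_prod_volume_eq_prod g

theorem integral_comp_inner_mul_exp_neg_norm_sq {n : ℕ} (φ : ℝ → ℝ)
    (a : EuclideanSpace ℝ (Fin (n + 1))) :
    ∫ x, φ (inner ℝ x a) * exp (-‖x‖ ^ 2) =
      √π ^ n * ∫ t, φ (‖a‖ * t) * exp (-t ^ 2) := by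
  obtain ⟨b, hb⟩ := exists_orthonormalBasis_inner_eq_norm_mul_repr finrank_euclideanSpace a 0
  have hprod (y : EuclideanSpace ℝ (Fin (n + 1))) : φ (‖a‖ * y 0) * exp (-‖y‖ ^ 2) =
      ∏ k, (if k = 0 then φ (‖a‖ * y k) else 1) * exp (-y k ^ 2) := by
    rw [Finset.prod_mul_distrib, Finset.prod_ite_eq' Finset.univ (0 : Fin (n + 1)), ← exp_sum,
      EuclideanSpace.norm_sq_eq]
    simp only [Finset.mem_univ, if_true, Real.norm_eq_abs, sq_abs, Finset.sum_neg_distrib]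
  have hrot : ∫ x, φ (inner ℝ x a) * exp (-‖x‖ ^ 2) =
      ∫ y : EuclideanSpace ℝ (Fin (n + 1)), φ (‖a‖ * y 0) * exp (-‖y‖ ^ 2) := by
    rw [← b.repr.measurePreserving.integral_comp b.repr.toHomeomorph.measurableEmbedding
      fun y => φ (‖a‖ * y 0) * exp (-‖y‖ ^ 2)]
    simp only [LinearIsometryEquiv.norm_map, ← hb]
  rw [hrot, funext hprod, integral_euclideanSpace_prod_eq_prod
    (fun k t => (if k = 0 then φ (‖a‖ * t) else 1) * exp (-t ^ 2)), Fin.prod_univ_succ]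
  have hgauss : ∫ t : ℝ, exp (-t ^ 2) = √π := by simpa using integral_gaussian 1
  simp only [if_true, Fin.succ_ne_zero, if_false, one_mul, hgauss, Finset.prod_const,
    Finset.card_univ, Fintype.card_fin]
  ring

instance : IsFiniteMeasure dOmega := by unfold dOmega; infer_instance

theorem integral_abs_pow_mul_exp_neg_sq (k : ℕ) :
    ∫ t : ℝ, |t| ^ k * exp (-t ^ 2) = Gamma ((k + 1) / 2) := by
  have h := integral_comp_abs (f := fun t : ℝ => t ^ k * exp (-t ^ 2))
  simp only [sq_abs] at h
  rw [h, integral_pow_mul_exp_neg_sq_Ioi]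
  ring

theorem finrank_V3 : Module.finrank ℝ V3 = 3 := finrank_euclideanSpace_fin

theorem integral_sphere_eq_of_homogeneous {f : V3 → ℝ} {k : ℕ}
    (hf : ∀ r : ℝ, 0 < r → ∀ x, f (r • x) = r ^ k * f x) :
    ∫ n : Sph, f n ∂dOmega =
      (∫ x, f x * exp (-‖x‖ ^ 2)) / (Gamma ((k + 3) / 2) / 2) := by
  rw [integral_mul_exp_neg_norm_sq_of_homogeneous volume hf, finrank_V3, Nat.cast_ofNat,
    mul_div_cancel_right₀ _ (div_pos (Gamma_pos_of_pos (by positivity)) two_pos).ne']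
  rfl

theorem integral_abs_inner_sphere (a : V3) :
    ∫ n : Sph, |inner ℝ (n : V3) a| ∂dOmega = 2 * π * ‖a‖ := by
  have hf (r : ℝ) (hr : 0 < r) (x : V3) : |inner ℝ (r • x) a| = r ^ 1 * |inner ℝ x a| := by
    rw [real_inner_smul_left, abs_mul, abs_of_pos hr, pow_one]
  rw [integral_sphere_eq_of_homogeneous (f := fun x : V3 => |inner ℝ x a|) hf,
    integral_comp_inner_mul_exp_neg_norm_sq (n := 2) (fun s => |s|) a]
  simp only [abs_mul, abs_norm, mul_assoc, integral_const_mul]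
  have h1 := integral_abs_pow_mul_exp_neg_sq 1
  simp only [pow_one] at h1
  rw [h1]
  norm_num [Gamma_one, Gamma_two, sq_sqrt pi_pos.le]
  ring

theorem integral_inner_sq_sphere (a : V3) :
    ∫ n : Sph, inner ℝ (n : V3) a ^ 2 ∂dOmega = 4 * π / 3 * ‖a‖ ^ 2 := by
  have hf (r : ℝ) (_ : 0 < r) (x : V3) : inner ℝ (r • x) a ^ 2 = r ^ 2 * inner ℝ x a ^ 2 := by
    rw [real_inner_smul_left, mul_pow]
  rw [integral_sphere_eq_of_homogeneous (f := fun x : V3 => inner ℝ x a ^ 2) hf,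
    integral_comp_inner_mul_exp_neg_norm_sq (n := 2) (fun s => s ^ 2) a]
  simp only [mul_pow, mul_assoc, integral_const_mul]
  have h2 := integral_abs_pow_mul_exp_neg_sq 2
  simp only [sq_abs] at h2
  rw [h2]
  have hG3 : Gamma ((2 + 1) / 2) = √π / 2 := by
    rw [show ((2 : ℝ) + 1) / 2 = 1 / 2 + 1 by norm_num, Gamma_add_one (by norm_num),
      Gamma_one_half_eq]; ring
  have hG5 : Gamma ((2 + 3) / 2) = 3 * √π / 4 := by
    rw [show ((2 : ℝ) + 3) / 2 = 1 / 2 + 1 + 1 by norm_num, Gamma_add_one (by norm_num),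
      Gamma_add_one (by norm_num), Gamma_one_half_eq]; ring
  push_cast
  rw [hG3, hG5, sq_sqrt pi_pos.le]
  field_simp

theorem Continuous.integrable_dOmega {f : Sph → ℝ} (hf : Continuous f) : Integrable f dOmega :=
  hf.integrable_of_hasCompactSupport (HasCompactSupport.of_compactSpace f)

theorem integral_inner_mul_inner_sphere (u v : V3) :
    ∫ n : Sph, inner ℝ (n : V3) u * inner ℝ (n : V3) v ∂dOmega = 4 * π / 3 * inner ℝ u v := by
  have hpol (n : V3) : inner ℝ n u * inner ℝ n v =
      (inner ℝ n (u + v) ^ 2 - inner ℝ n (u - v) ^ 2) / 4 := by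
    rw [inner_add_right, inner_sub_right]; ring
  simp_rw [hpol]
  rw [integral_div, integral_sub (by fun_prop : Continuous _).integrable_dOmega
    (by fun_prop : Continuous _).integrable_dOmega, integral_inner_sq_sphere,
    integral_inner_sq_sphere, norm_add_sq_real, norm_sub_sq_real]
  ring

theorem integral_coord_mul_coord_sphere (i j : Fin 3) :
    ∫ n : Sph, (n : V3) i * (n : V3) j ∂dOmega = if i = j then 4 * π / 3 else 0 := by
  have h := integral_inner_mul_inner_sphere (EuclideanSpace.single i 1) (EuclideanSpace.single j 1)
  simpa [EuclideanSpace.inner_single_right, PiLp.single_apply, eq_comm] using h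

theorem integral_inner_toEuclideanLin_sphere (M : Matrix (Fin 3) (Fin 3) ℝ) :
    ∫ n : Sph, inner ℝ (n : V3) (M.toEuclideanLin n) ∂dOmega = 4 * π / 3 * M.trace := by
  have hexp (x : V3) : inner ℝ x (M.toEuclideanLin x) = ∑ i, ∑ j, M i j * (x i * x j) := by
    simp only [PiLp.inner_apply, Matrix.ofLp_toLpLin, Matrix.toLin'_apply, Matrix.mulVec,
      dotProduct, RCLike.inner_apply, conj_trivial, Finset.sum_mul]
    exact Finset.sum_congr rfl fun i _ => Finset.sum_congr rfl fun j _ => by ring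
  have hint (i j : Fin 3) :
      Integrable (fun n : Sph => M i j * ((n : V3) i * (n : V3) j)) dOmega :=
    (by fun_prop : Continuous _).integrable_dOmega
  simp_rw [hexp]
  rw [integral_finsetSum _ fun i _ => integrable_finsetSum _ fun j _ => hint i j]
  simp_rw [integral_finsetSum _ fun j _ => hint _ j, integral_const_mul,
    integral_coord_mul_coord_sphere]
  simp [Matrix.trace, Finset.mul_sum, mul_comm]

theorem integral_mul_inner_sphere_le {I : Sph → ℝ} (hI : Measurable I) (hI1 : ∀ n, |I n| ≤ 1)
    (a : V3) : ∫ n : Sph, I n * inner ℝ (n : V3) a ∂dOmega ≤ 2 * π * ‖a‖ := by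
  have hcont : Continuous fun n : Sph => inner ℝ (n : V3) a := by fun_prop
  rw [← integral_abs_inner_sphere]
  refine integral_mono (hcont.integrable_dOmega.bdd_mul hI.aestronglyMeasurable
    (ae_of_all _ fun n => (hI1 n).trans_eq' (Real.norm_eq_abs _)))
    (continuous_abs.comp hcont).integrable_dOmega fun n => ?_
  calc I n * inner ℝ (n : V3) a ≤ |I n| * |inner ℝ (n : V3) a| := by
        rw [← abs_mul]; exact le_abs_self _
    _ ≤ |inner ℝ (n : V3) a| := mul_le_of_le_one_left (abs_nonneg _) (hI1 n)

theorem exists_norm_eq_one_inner_eq_norm {E : Type*} [NormedAddCommGroup E]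
    [InnerProductSpace ℝ E] [Nontrivial E] (v : E) : ∃ m : E, ‖m‖ = 1 ∧ inner ℝ m v = ‖v‖ := by
  rcases eq_or_ne v 0 with rfl | hv
  · obtain ⟨m, hm⟩ := exists_norm_eq E zero_le_one
    exact ⟨m, hm, by simp⟩
  refine ⟨‖v‖⁻¹ • v, norm_smul_inv_norm hv, ?_⟩
  rw [real_inner_smul_left, real_inner_self_eq_norm_sq, sq, ← mul_assoc,
    inv_mul_cancel₀ (norm_ne_zero_iff.2 hv), one_mul]

theorem bilin_eq_inner (M : Matrix (Fin 3) (Fin 3) ℝ) (m n : V3) :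
    bilin M m n = inner ℝ m (M.toEuclideanLin n) := by
  simp only [bilin, PiLp.inner_apply, Matrix.ofLp_toLpLin, Matrix.toLin'_apply, Matrix.mulVec,
    dotProduct, RCLike.inner_apply, conj_trivial, Finset.sum_mul]
  exact Finset.sum_congr rfl fun i _ => Finset.sum_congr rfl fun j _ => by ring

theorem norm_toEuclideanLin_le_maxSingularValue (T : Matrix (Fin 3) (Fin 3) ℝ) {y : V3}
    (hy : ‖y‖ = 1) : ‖T.toEuclideanLin y‖ ≤ maxSingularValue T := by
  set A := LinearMap.toContinuousLinearMap T.toEuclideanLin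
  have hbdd : BddAbove {x : ℝ | ∃ m n : V3, ‖m‖ = 1 ∧ ‖n‖ = 1 ∧ x = bilin T m n} := by
    refine ⟨‖A‖, ?_⟩
    rintro _ ⟨m, n, hm, hn, rfl⟩
    calc bilin T m n ≤ ‖m‖ * ‖A n‖ := (bilin_eq_inner T m n).trans_le (real_inner_le_norm _ _)
      _ ≤ ‖A‖ := by simpa [hm, hn] using A.le_opNorm n
  obtain ⟨m, hm, hmv⟩ := exists_norm_eq_one_inner_eq_norm (T.toEuclideanLin y)
  exact le_csSup hbdd ⟨m, y, hm, hy, by rw [bilin_eq_inner, hmv]⟩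

theorem integral_sum_mul_inner_le_maxSingularValue (T : Matrix (Fin 3) (Fin 3) ℝ) {N : ℕ}
    {p : Fin N → ℝ} {I : Fin N → Sph → ℝ} {lam : Fin N → V3} (hp0 : ∀ l, 0 ≤ p l)
    (hp1 : ∑ l, p l = 1) (hImeas : ∀ l, Measurable (I l)) (hIbd : ∀ l m, |I l m| ≤ 1)
    (hlam : ∀ l, ‖lam l‖ = 1) :
    ∫ m : Sph, ∑ l, p l * (I l m * inner ℝ (m : V3) (T.toEuclideanLin (lam l))) ∂dOmega ≤
      2 * π * maxSingularValue T := by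
  have hint (l : Fin N) :
      Integrable (fun m : Sph => I l m * inner ℝ (m : V3) (T.toEuclideanLin (lam l))) dOmega :=
    (by fun_prop : Continuous _).integrable_dOmega.bdd_mul (hImeas l).aestronglyMeasurable
      (ae_of_all _ fun m => (hIbd l m).trans_eq' (Real.norm_eq_abs _))
  rw [integral_finsetSum _ fun l _ => (hint l).const_mul (p l)]
  calc ∑ l, ∫ m : Sph, p l * (I l m * inner ℝ (m : V3) (T.toEuclideanLin (lam l))) ∂dOmega
      ≤ ∑ l, p l * (2 * π * maxSingularValue T) := by
        refine Finset.sum_le_sum fun l _ => ?_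
        rw [integral_const_mul]
        refine mul_le_mul_of_nonneg_left ?_ (hp0 l)
        exact (integral_mul_inner_sphere_le (hImeas l) (hIbd l) _).trans
          (mul_le_mul_of_nonneg_left (norm_toEuclideanLin_le_maxSingularValue T (hlam l))
            (by positivity))
    _ = 2 * π * maxSingularValue T := by rw [← Finset.sum_mul, hp1, one_mul]

theorem toEuclideanLin_transpose_eq_sum_smul {S : Matrix (Fin 3) (Fin 3) ℝ} {N : ℕ}
    {p : Fin N → ℝ} {I : Fin N → Sph → ℝ} {lam : Fin N → V3}
    (hE : ∀ m n : Sph, bilin S m n = ∑ l, p l * I l m * dot n (lam l)) (m : Sph) :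
    Sᵀ.toEuclideanLin m = ∑ l, (p l * I l m) • lam l := by
  ext j
  simpa [bilin, dot, PiLp.single_apply, Matrix.mulVec, dotProduct] using
    hE m ⟨EuclideanSpace.single j 1, by simp⟩

/-- If `(2/3) ∑ᵢⱼ Tᵢⱼ Sᵢⱼ` exceeds the largest singular value `T₁` of `T`,
then the correlation function `E_S(m,n) = m · S n` admits no LHS (non-steering) model. -/
theorem steering_criterion_via_scalar_product (T S : Matrix (Fin 3) (Fin 3) ℝ)
    (h : (2 / 3) * (∑ i, ∑ j, T i j * S i j) > maxSingularValue T) :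
    ¬ HasLHSModel (fun m n => bilin S m n) := by
  rintro ⟨N, p, I, lam, hp0, hp1, hImeas, hIbd, hlam, hE⟩
  have hpoint (m : Sph) : inner ℝ (m : V3) ((T * Sᵀ).toEuclideanLin m) =
      ∑ l, p l * (I l m * inner ℝ (m : V3) (T.toEuclideanLin (lam l))) := by
    rw [Matrix.toLpLin_mul_same, LinearMap.comp_apply, toEuclideanLin_transpose_eq_sum_smul hE,
      map_sum, inner_sum]
    simp only [map_smul, inner_smul_right, mul_assoc]
  have hbound : 4 * π / 3 * ∑ i, ∑ j, T i j * S i j ≤ 2 * π * maxSingularValue T :=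
    calc 4 * π / 3 * ∑ i, ∑ j, T i j * S i j
        = ∫ m : Sph, inner ℝ (m : V3) ((T * Sᵀ).toEuclideanLin m) ∂dOmega := by
          rw [integral_inner_toEuclideanLin_sphere]
          simp [Matrix.trace, Matrix.mul_apply]
      _ ≤ 2 * π * maxSingularValue T := by
          simp_rw [hpoint]
          exact integral_sum_mul_inner_le_maxSingularValue T hp0 hp1 hImeas hIbd hlam
  linarith [mul_lt_mul_of_pos_left h (by positivity : (0 : ℝ) < 2 * π)]
end
end
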